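/- Let Q be an Ω-algebra and (X,τ) a Q-topological space. Then τ equals the set of all Q-continuous maps from (X,τ) to the Q-Sierpinski space (Q, ⟨{id_Q}⟩). -/

import Mathlib

universe u v w x

/-- Closure of a set of `Q`-valued functions on `X` under the pointwise
Ω-algebra operations `ops`. -/
def Closed {Q : Type u} {I : Type v} {n : I → Type w} (ops : ∀ i, (n i → Q) → Q)
    {X : Type x} (B : Set (X → Q)) : Prop :=
  ∀ i (p : n i → X → Q), (∀ j, p j ∈ B) → (fun x => ops i (fun j => p j x)) ∈ B

/-- A `Q`-topology on `X`: a nonempty subset of `Q^X` closed under the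
pointwise operations, i.e. a subalgebra of the power algebra. -/
def IsQTop {Q : Type u} {I : Type v} {n : I → Type w} (ops : ∀ i, (n i → Q) → Q)
    {X : Type x} (τ : Set (X → Q)) : Prop :=
  τ.Nonempty ∧ Closed ops τ

/-- The subalgebra of `Q^X` generated by `S`: the intersection of all
subalgebras containing `S`. -/
def gen {Q : Type u} {I : Type v} {n : I → Type w} (ops : ∀ i, (n i → Q) → Q)
    {X : Type x} (S : Set (X → Q)) : Set (X → Q) :=
  ⋂₀ {B | S ⊆ B ∧ IsQTop ops B}

/-- `Q`-continuity of `f : (X,τ) → (Y,η)` : preimages `α ∘ f` of members of `η`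
belong to `τ`. -/
def QCont {Q : Type u} {I : Type v} {n : I → Type w} (ops : ∀ i, (n i → Q) → Q)
    {X : Type x} {Y : Type x} (τ : Set (X → Q)) (η : Set (Y → Q)) (f : X → Y) : Prop :=
  ∀ α ∈ η, (fun x => α (f x)) ∈ τ

/-- The `Q`-Sierpinski topology on `S = Q`: the subalgebra of `Q^Q` generated
by the identity map. -/
def sierp {Q : Type u} {I : Type v} {n : I → Type w} (ops : ∀ i, (n i → Q) → Q) :
    Set (Q → Q) :=
  gen ops ({id} : Set (Q → Q))

section Generated

variable {Q : Type u} {I : Type v} {n : I → Type w} (ops : ∀ i, (n i → Q) → Q)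

theorem subset_gen {X : Type x} (S : Set (X → Q)) : S ⊆ gen ops S :=
  fun _ hα _ hB => hB.1 hα

theorem gen_subset {X : Type x} {S B : Set (X → Q)} (hSB : S ⊆ B) (hB : IsQTop ops B) :
    gen ops S ⊆ B :=
  Set.sInter_subset_of_mem ⟨hSB, hB⟩

end Generated

section Continuity

variable {Q : Type u} {I : Type v} {n : I → Type w} {ops : ∀ i, (n i → Q) → Q}
  {X Y : Type x} {τ : Set (X → Q)}

theorem Closed.precomp (hτ : Closed ops τ) (f : X → Y) :
    Closed ops {α : Y → Q | (fun x => α (f x)) ∈ τ} :=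
  fun i p hp => hτ i (fun j x => p j (f x)) hp

-- The maps `α` with `α ∘ f ∈ τ` form a subalgebra, so it contains `gen ops S` once it contains `S`.
theorem qCont_gen_iff (hτ : Closed ops τ) {S : Set (Y → Q)} (hS : S.Nonempty) (f : X → Y) :
    QCont ops τ (gen ops S) f ↔ ∀ α ∈ S, (fun x => α (f x)) ∈ τ := by
  refine ⟨fun hf α hα => hf α (subset_gen ops S hα), fun hgen => ?_⟩
  have hpre : IsQTop ops {α : Y → Q | (fun x => α (f x)) ∈ τ} :=
    ⟨hS.imp hgen, hτ.precomp f⟩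
  exact gen_subset ops hgen hpre

end Continuity

theorem qCont_sierp_iff {Q : Type u} {I : Type v} {n : I → Type w} {ops : ∀ i, (n i → Q) → Q}
    {X : Type u} {τ : Set (X → Q)} (hτ : Closed ops τ) (p : X → Q) :
    QCont ops τ (sierp ops) p ↔ p ∈ τ := by
  rw [sierp, qCont_gen_iff hτ (Set.singleton_nonempty id)]
  simp only [Set.mem_singleton_iff, forall_eq, id]

theorem stmt_11 {Q : Type u} {I : Type v} {n : I → Type w} (ops : ∀ i, (n i → Q) → Q)
    {X : Type u} (τ : Set (X → Q)) (hτ : IsQTop ops τ) :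
    τ = {p : X → Q | QCont ops τ (sierp ops) p} := by
  ext p
  exact (qCont_sierp_iff hτ.2 p).symm
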